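/- arXiv:2508.08738 — 2 statements merged into one kernel-verified Lean document; each statement's English description precedes it below -/
import Mathlib

section
/- Let M = M₀ ⊕ M₁ carry a representation of 𝔤 with M₀ = ℂ[u,v]·1₀ and M₁ = ℂ[u,v]·1₁, with nonzero λ ∈ ℂ and β ∈ ℂ[v] such that for all m ∈ ℤ and f ∈ ℂ[u,v]: L_m(f·1₀) = λ^m(u + mβ(v))f(u+m, v)·1₀, H_m(f·1₀) = λ^m v f(u+m, v)·1₀, L_m(f·1₁) = λ^m(u + m(β(v) + 1/2))f(u+m, v)·1₁, H_m(f·1₁) = λ^m v f(u+m, v)·1₁, and suppose G_p(1₀) = α_p·1₁ and G_p(1₁) = (λ^{2p}/α_p)(u + 2pβ(v))·1₀ with α_p ∈ ℂ nonzero for every p ∈ ℤ + 1/2. Then α_{m+1/2} = λ^m α_{1/2} for all m ∈ ℤ, and after replacing 1₁ by α_{1/2}·1₁ one has, for every p ∈ ℤ + 1/2: G_p(1₀) = λ^{p−1/2}·1₁, G_p(1₁) = λ^{p+1/2}(u + 2pβ(v))·1₀, Q_p(1₁) = λ^{p+1/2} v·1₀, and Q_p(1₀) = 0. -/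
open Polynomial

noncomputable section

/-- `ℂ[x,y]`, realized as polynomials in an outer variable `x` (= `X`) with coefficients in
`ℂ[y]`; the inner variable `y` is `C X`.  The same type also models `ℂ[s,t]`. -/
abbrev P2 : Type := Polynomial (Polynomial ℂ)

/-- the polynomial `x` -/
def xP : P2 := Polynomial.X

/-- the polynomial `y` -/
def yP : P2 := Polynomial.C Polynomial.X

/-- multiplication by a fixed polynomial, as a `ℂ`-linear operator on `ℂ[x,y]` -/
def mulOp (a : P2) : P2 →ₗ[ℂ] P2 := LinearMap.mulLeft ℂ a

/-- the substitution `f(x,y) ↦ f(x+c,y)`, as a `ℂ`-linear operator on `ℂ[x,y]` -/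
def shiftOp (c : ℂ) : P2 →ₗ[ℂ] P2 :=
  (Polynomial.taylor (Polynomial.C c)).restrictScalars ℂ

/-- `f(x,y) ↦ λ^m (x + m β(y)) f(x+m, y)` -/
def genL (lam : ℂ) (β : Polynomial ℂ) (m : ℤ) : P2 →ₗ[ℂ] P2 :=
  lam ^ m • (mulOp (xP + Polynomial.C ((m : ℂ) • β)) ∘ₗ shiftOp (m : ℂ))

/-- `f(x,y) ↦ λ^m y f(x+m, y)` -/
def genH (lam : ℂ) (m : ℤ) : P2 →ₗ[ℂ] P2 :=
  lam ^ m • (mulOp yP ∘ₗ shiftOp (m : ℂ))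

/- In everything that follows, the odd (half-integer) index `p ∈ ℤ + 1/2` is encoded by the
integer `k : ℤ` with `p = k + 1/2`. -/

/-- `L_m` on the even part `ℂ[x,y]` of `Ω(λ,β)` -/
def omegaLe (lam : ℂ) (β : Polynomial ℂ) (m : ℤ) : P2 →ₗ[ℂ] P2 := genL lam β m

/-- `L_m` on the odd part `ℂ[s,t]` of `Ω(λ,β)` -/
def omegaLo (lam : ℂ) (β : Polynomial ℂ) (m : ℤ) : P2 →ₗ[ℂ] P2 :=
  genL lam (β + Polynomial.C (1/2)) m

/-- `H_m` on either part of `Ω(λ,β)` -/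
def omegaH (lam : ℂ) (m : ℤ) : P2 →ₗ[ℂ] P2 := genH lam m

/-- `G_{k+1/2} : M₀ → M₁`, `f(x,y) ↦ λ^{p-1/2} f(s+p,t)` -/
def omegaGe (lam : ℂ) (k : ℤ) : P2 →ₗ[ℂ] P2 := lam ^ k • shiftOp ((k : ℂ) + 1/2)

/-- `G_{k+1/2} : M₁ → M₀`, `f(s,t) ↦ λ^{p+1/2} (x + 2p β(y)) f(x+p,y)` -/
def omegaGo (lam : ℂ) (β : Polynomial ℂ) (k : ℤ) : P2 →ₗ[ℂ] P2 :=
  lam ^ (k + 1) • (mulOp (xP + Polynomial.C (((2*k+1 : ℤ) : ℂ) • β)) ∘ₗ shiftOp ((k : ℂ) + 1/2))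

/-- `Q_{k+1/2} : M₀ → M₁` is the zero map -/
def omegaQe (_k : ℤ) : P2 →ₗ[ℂ] P2 := 0

/-- `Q_{k+1/2} : M₁ → M₀`, `f(s,t) ↦ λ^{p+1/2} y f(x+p,y)` -/
def omegaQo (lam : ℂ) (k : ℤ) : P2 →ₗ[ℂ] P2 :=
  lam ^ (k + 1) • (mulOp yP ∘ₗ shiftOp ((k : ℂ) + 1/2))

/-- A representation of the N=1 Heisenberg-Virasoro superalgebra `𝔤` on the `ℤ₂`-graded
complex vector space `M₀ ⊕ M₁`: operators `Le m`/`Lo m` (resp. `He`/`Ho`) are the even/odd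
components of `L_m` (resp. `H_m`), and `Ge k`/`Go k` (resp. `Qe`/`Qo`) are the two components
of the grading-reversing operator `G_{k+1/2}` (resp. `Q_{k+1/2}`); all ten super-bracket
relations are required to hold on both graded components. -/
structure GRep (M₀ M₁ : Type*) [AddCommGroup M₀] [Module ℂ M₀]
    [AddCommGroup M₁] [Module ℂ M₁] where
  Le : ℤ → M₀ →ₗ[ℂ] M₀
  Lo : ℤ → M₁ →ₗ[ℂ] M₁
  He : ℤ → M₀ →ₗ[ℂ] M₀
  Ho : ℤ → M₁ →ₗ[ℂ] M₁
  Ge : ℤ → M₀ →ₗ[ℂ] M₁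
  Go : ℤ → M₁ →ₗ[ℂ] M₀
  Qe : ℤ → M₀ →ₗ[ℂ] M₁
  Qo : ℤ → M₁ →ₗ[ℂ] M₀
  rel_LL_e : ∀ m n : ℤ, Le m ∘ₗ Le n - Le n ∘ₗ Le m = ((m : ℂ) - (n : ℂ)) • Le (m + n)
  rel_LL_o : ∀ m n : ℤ, Lo m ∘ₗ Lo n - Lo n ∘ₗ Lo m = ((m : ℂ) - (n : ℂ)) • Lo (m + n)
  rel_LH_e : ∀ m n : ℤ, Le m ∘ₗ He n - He n ∘ₗ Le m = (-(n : ℂ)) • He (m + n)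
  rel_LH_o : ∀ m n : ℤ, Lo m ∘ₗ Ho n - Ho n ∘ₗ Lo m = (-(n : ℂ)) • Ho (m + n)
  rel_LG_e : ∀ (m k : ℤ),
    Lo m ∘ₗ Ge k - Ge k ∘ₗ Le m = ((m : ℂ)/2 - ((k : ℂ) + 1/2)) • Ge (m + k)
  rel_LG_o : ∀ (m k : ℤ),
    Le m ∘ₗ Go k - Go k ∘ₗ Lo m = ((m : ℂ)/2 - ((k : ℂ) + 1/2)) • Go (m + k)
  rel_LQ_e : ∀ (m k : ℤ),
    Lo m ∘ₗ Qe k - Qe k ∘ₗ Le m = (-((m : ℂ)/2 + ((k : ℂ) + 1/2))) • Qe (m + k)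
  rel_LQ_o : ∀ (m k : ℤ),
    Le m ∘ₗ Qo k - Qo k ∘ₗ Lo m = (-((m : ℂ)/2 + ((k : ℂ) + 1/2))) • Qo (m + k)
  rel_HG_e : ∀ (m k : ℤ), Ho m ∘ₗ Ge k - Ge k ∘ₗ He m = (m : ℂ) • Qe (m + k)
  rel_HG_o : ∀ (m k : ℤ), He m ∘ₗ Go k - Go k ∘ₗ Ho m = (m : ℂ) • Qo (m + k)
  rel_GG_e : ∀ k l : ℤ, Go k ∘ₗ Ge l + Go l ∘ₗ Ge k = (2 : ℂ) • Le (k + l + 1)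
  rel_GG_o : ∀ k l : ℤ, Ge k ∘ₗ Go l + Ge l ∘ₗ Go k = (2 : ℂ) • Lo (k + l + 1)
  rel_GQ_e : ∀ k l : ℤ, Go k ∘ₗ Qe l + Qo l ∘ₗ Ge k = He (k + l + 1)
  rel_GQ_o : ∀ k l : ℤ, Ge k ∘ₗ Qo l + Qe l ∘ₗ Go k = Ho (k + l + 1)
  rel_HH_e : ∀ m n : ℤ, He m ∘ₗ He n = He n ∘ₗ He m
  rel_HH_o : ∀ m n : ℤ, Ho m ∘ₗ Ho n = Ho n ∘ₗ Ho m
  rel_HQ_e : ∀ (m k : ℤ), Ho m ∘ₗ Qe k = Qe k ∘ₗ He m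
  rel_HQ_o : ∀ (m k : ℤ), He m ∘ₗ Qo k = Qo k ∘ₗ Ho m
  rel_QQ_e : ∀ k l : ℤ, Qo k ∘ₗ Qe l + Qo l ∘ₗ Qe k = 0
  rel_QQ_o : ∀ k l : ℤ, Qe k ∘ₗ Qo l + Qe l ∘ₗ Qo k = 0

/-- evaluation of a two-variable polynomial (an element of `P2`, outer variable ↦ `A`,
inner variable ↦ `B`) at a pair of commuting operators -/
def eval2End {V : Type*} [AddCommGroup V] [Module ℂ V] (A B : Module.End ℂ V)
    (f : P2) : Module.End ℂ V :=
  Polynomial.eval₂ (Polynomial.aeval B).toRingHom A f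

/-- multiplication by a fixed polynomial on `ℂ[x]` -/
def mul1 (a : Polynomial ℂ) : Polynomial ℂ →ₗ[ℂ] Polynomial ℂ := LinearMap.mulLeft ℂ a

/-- the substitution `f(x) ↦ f(x+c)` on `ℂ[x]` -/
def tay (c : ℂ) : Polynomial ℂ →ₗ[ℂ] Polynomial ℂ := Polynomial.taylor c

/-- `f(x) ↦ λ^m (x + m c) f(x+m)` -/
def phiL (lam c : ℂ) (m : ℤ) : Polynomial ℂ →ₗ[ℂ] Polynomial ℂ :=
  lam ^ m • (mul1 (Polynomial.X + Polynomial.C ((m : ℂ) * c)) ∘ₗ tay (m : ℂ))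

/-- `f(x) ↦ λ^m b f(x+m)` -/
def phiH (lam b : ℂ) (m : ℤ) : Polynomial ℂ →ₗ[ℂ] Polynomial ℂ :=
  (lam ^ m * b) • tay (m : ℂ)

/-- `f(x) ↦ λ^{p-1/2} f(s+p)`, `p = k + 1/2` -/
def phiGe (lam : ℂ) (k : ℤ) : Polynomial ℂ →ₗ[ℂ] Polynomial ℂ :=
  lam ^ k • tay ((k : ℂ) + 1/2)

/-- `f(s) ↦ λ^{p+1/2} (x + 2 p c) f(x+p)`, `p = k + 1/2` -/
def phiGo (lam c : ℂ) (k : ℤ) : Polynomial ℂ →ₗ[ℂ] Polynomial ℂ :=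
  lam ^ (k + 1) • (mul1 (Polynomial.X + Polynomial.C (((2*k+1 : ℤ) : ℂ) * c)) ∘ₗ tay ((k : ℂ) + 1/2))

/-- `f(s) ↦ λ^{p+1/2} b f(x+p)`, `p = k + 1/2` -/
def phiQo (lam b : ℂ) (k : ℤ) : Polynomial ℂ →ₗ[ℂ] Polynomial ℂ :=
  (lam ^ (k + 1) * b) • tay ((k : ℂ) + 1/2)

/-- one graded component of `R_g`, i.e. `g(y)ℂ[x,y]` (equivalently `g(t)ℂ[s,t]`) -/
def Rg (g : Polynomial ℂ) : Submodule ℂ P2 := LinearMap.range (mulOp (Polynomial.C g))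

/-- the even component of `S_g`, i.e. `g(y)(xℂ[x,y] + yℂ[x,y])` -/
def Sg (g : Polynomial ℂ) : Submodule ℂ P2 :=
  LinearMap.range (mulOp (xP * Polynomial.C g)) ⊔ LinearMap.range (mulOp (yP * Polynomial.C g))

/-- the embedding `ℂ[x] → ℂ[x,y]` -/
def embX (f : Polynomial ℂ) : P2 := f.map Polynomial.C

/-- `f(x) ↦` class of `g'(y)·f(x)` in `ℂ[x,y]/R_g` -/
def psiMap (g g' : Polynomial ℂ) (f : Polynomial ℂ) : P2 ⧸ Rg g :=
  (Rg g).mkQ (Polynomial.C g' * embX f)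

lemma genL_one (lam : ℂ) (β : Polynomial ℂ) (m : ℤ) :
    genL lam β m 1 = lam ^ m • (xP + Polynomial.C ((m : ℂ) • β)) := by
  simp [genL, mulOp, shiftOp, taylor_one, mul_one]

lemma genH_one (lam : ℂ) (m : ℤ) :
    genH lam m 1 = lam ^ m • yP := by
  simp [genH, mulOp, shiftOp, taylor_one, mul_one]


/-- Under the hypotheses of the second alternative of Lemma 3.3
(α-case of Lemma `lem3.22`), one has `α_{m+1/2} = λ^m α_{1/2}` for all `m ∈ ℤ`, and after
replacing `1₁` by `α_{1/2}·1₁` the operators `G_p`, `Q_p` act by the `Ω(λ,β)` formulas on the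
basis vectors.  (The odd index `k : ℤ` encodes `p = k + 1/2`, so `α_{1/2} = a 0`.) -/
theorem statement3 (lam : ℂ) (hlam : lam ≠ 0) (β : Polynomial ℂ) (R : GRep P2 P2)
    (hLe : ∀ m : ℤ, R.Le m = genL lam β m)
    (hHe : ∀ m : ℤ, R.He m = genH lam m)
    (hLo : ∀ m : ℤ, R.Lo m = genL lam (β + Polynomial.C (1/2)) m)
    (hHo : ∀ m : ℤ, R.Ho m = genH lam m)
    (a : ℤ → ℂ) (ha : ∀ k, a k ≠ 0)
    (hGe : ∀ k : ℤ, R.Ge k 1 = a k • (1 : P2))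
    (hGo : ∀ k : ℤ, R.Go k 1 = (lam ^ (2*k+1) / a k) •
      (xP + Polynomial.C (((2*k+1 : ℤ) : ℂ) • β))) :
    (∀ m : ℤ, a m = lam ^ m * a 0) ∧
    (∀ k : ℤ,
      R.Ge k 1 = lam ^ k • (a 0 • (1 : P2)) ∧
      a 0 • R.Go k 1 = lam ^ (k+1) • (xP + Polynomial.C (((2*k+1 : ℤ) : ℂ) • β)) ∧
      a 0 • R.Qo k 1 = lam ^ (k+1) • yP ∧
      R.Qe k 1 = 0) := by
  -- Step A
  have hA : ∀ k : ℤ, a k = lam ^ k * a 0 := by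
    intro k
    have h1 := LinearMap.congr_fun (R.rel_GG_e k 0) 1
    simp only [LinearMap.add_apply, LinearMap.comp_apply, LinearMap.smul_apply, hGe, hGo, hLe,
      map_smul, genL_one] at h1
    have h2 := congrArg (fun p : P2 => (p.coeff 1).coeff 0) h1
    simp only [xP, Polynomial.coeff_smul, Polynomial.coeff_add, Polynomial.coeff_C,
      Polynomial.coeff_X_one, Polynomial.coeff_one, smul_eq_mul] at h2
    norm_num at h2
    clear h1
    have e1 : lam ^ (2*k+1) = lam ^ k * lam ^ k * lam := by
      rw [zpow_add₀ hlam, zpow_one, two_mul, zpow_add₀ hlam]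
    have e2 : lam ^ (k+1) = lam ^ k * lam := by rw [zpow_add₀ hlam, zpow_one]
    rw [e1, e2] at h2
    have hk := ha k; have h0 := ha 0
    field_simp at h2
    have h3 : (a 0 * lam ^ k - a k)^2 * lam = 0 := by linear_combination lam * h2
    have h4 : a 0 * lam ^ k - a k = 0 := by
      rcases mul_eq_zero.mp h3 with h | h
      · exact pow_eq_zero_iff (by norm_num) |>.mp h
      · exact absurd h hlam
    linear_combination -h4
  -- Step B : Qe vanishes on 1
  have hQe : ∀ n : ℤ, R.Qe n 1 = 0 := by
    intro n
    have hE : ∀ m j : ℤ, (m:ℂ) • R.Qe (m + j) 1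
        = lam ^ m • (a j • yP - R.Ge j yP) := by
      intro m j
      have h := LinearMap.congr_fun (R.rel_HG_e m j) 1
      simp only [LinearMap.sub_apply, LinearMap.comp_apply, LinearMap.smul_apply, hGe, hHe, hHo,
        map_smul, genH_one] at h
      rw [← h, smul_sub, smul_comm]
    have hv : ∀ j : ℤ, a j • yP - R.Ge j yP = lam⁻¹ • R.Qe (j + 1) 1 := by
      intro j
      have h := hE 1 j
      rw [Int.cast_one, one_smul, zpow_one, add_comm (1:ℤ) j] at h
      rw [h, inv_smul_smul₀ hlam]
    have h2 : ∀ j : ℤ, (2:ℂ) • R.Qe (j + 2) 1 = lam • R.Qe (j + 1) 1 := by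
      intro j
      have h := hE 2 j
      rw [hv j, smul_smul, show (2:ℤ) + j = j + 2 by ring,
        show ((2:ℤ):ℂ) = (2:ℂ) by norm_num,
        show lam ^ (2:ℤ) * lam⁻¹ = lam by
          rw [show (2:ℤ) = 1 + 1 by ring, zpow_add₀ hlam, zpow_one]; field_simp] at h
      exact h
    have h3 : ∀ j : ℤ, -(R.Qe (j - 1) 1) = (lam⁻¹ * lam⁻¹) • R.Qe (j + 1) 1 := by
      intro j
      have h := hE (-1) j
      rw [hv j, smul_smul] at h
      rw [show (j:ℤ) - 1 = -1 + j by ring]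
      calc -(R.Qe (-1 + j) 1) = ((-1 : ℤ):ℂ) • R.Qe (-1 + j) 1 := by
            push_cast; rw [neg_smul, one_smul]
        _ = _ := by rw [h]; congr 1; rw [zpow_neg_one]
    have k1 := h2 n
    have k2 := h2 (n - 1)
    have k3 := h3 (n + 1)
    rw [show n - 1 + 2 = n + 1 by ring, show n - 1 + 1 = n by ring] at k2
    rw [show n + 1 - 1 = n by ring, show n + 1 + 1 = n + 2 by ring] at k3
    have k4 : R.Qe (n + 2) 1 = (-(lam * lam)) • R.Qe n 1 := by
      have h := congrArg (fun x => (lam * lam) • x) k3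
      simp only [smul_neg, smul_smul] at h
      rw [show lam * lam * (lam⁻¹ * lam⁻¹) = 1 by field_simp, one_smul] at h
      rw [neg_smul]
      exact h.symm
    have k5 : ((5:ℂ) * (lam * lam)) • R.Qe n 1 = 0 := by
      linear_combination (norm := module) (-2:ℂ) • k1 - lam • k2 + (4:ℂ) • k4
    rcases smul_eq_zero.mp k5 with h | h
    · exact absurd h (by simp [hlam])
    · exact h
  refine ⟨hA, fun k => ⟨?_, ?_, ?_, hQe k⟩⟩
  · rw [hGe, hA k, mul_smul]
  · rw [hGo, smul_smul]
    congr 1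
    rw [hA k,
      show lam ^ (2*k+1) = lam ^ k * lam ^ k * lam by
        rw [zpow_add₀ hlam, zpow_one, two_mul, zpow_add₀ hlam],
      show lam ^ (k+1) = lam ^ k * lam by rw [zpow_add₀ hlam, zpow_one]]
    have h0 := ha 0
    have hk : lam ^ k ≠ 0 := zpow_ne_zero _ hlam
    field_simp
  · have h := LinearMap.congr_fun (R.rel_GQ_e 0 k) 1
    simp only [LinearMap.add_apply, LinearMap.comp_apply, hQe, map_zero, hGe, map_smul, hHe,
      genH_one, zero_add] at h
    exact h
end
end

section
/- Let λ be a nonzero complex number and β ∈ ℂ[y] with β(0) = 0. Then a graded subspace F = F₀ ⊕ F₁ of Ω(λ,β) is a submodule if and only if F = R_g or F = S_g for some g ∈ ℂ[y]; moreover S_g ⊆ R_g ⊆ R_ĝ whenever ĝ divides g. -/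
open Polynomial

noncomputable section

/-- `F₀ ⊕ F₁` is a (graded) submodule of `Ω(λ,β)`: it is invariant under all the operators
`L_m`, `H_m`, `G_p`, `Q_p`. -/
def IsOmegaSub (lam : ℂ) (β : Polynomial ℂ) (F₀ F₁ : Submodule ℂ P2) : Prop :=
  (∀ m : ℤ, ∀ f ∈ F₀, omegaLe lam β m f ∈ F₀) ∧
  (∀ m : ℤ, ∀ f ∈ F₁, omegaLo lam β m f ∈ F₁) ∧
  (∀ m : ℤ, ∀ f ∈ F₀, omegaH lam m f ∈ F₀) ∧
  (∀ m : ℤ, ∀ f ∈ F₁, omegaH lam m f ∈ F₁) ∧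
  (∀ k : ℤ, ∀ f ∈ F₀, omegaGe lam k f ∈ F₁) ∧
  (∀ k : ℤ, ∀ f ∈ F₁, omegaGo lam β k f ∈ F₀) ∧
  (∀ k : ℤ, ∀ f ∈ F₀, omegaQe k f ∈ F₁) ∧
  (∀ k : ℤ, ∀ f ∈ F₁, omegaQo lam k f ∈ F₀)


-- basics
lemma shiftOp_apply (c : ℂ) (f : P2) : shiftOp c f = taylor (Polynomial.C c) f := rfl
lemma shiftOp_mul (c : ℂ) (f g : P2) : shiftOp c (f * g) = shiftOp c f * shiftOp c g :=
  taylor_mul _ f g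
lemma shiftOp_C (c : ℂ) (a : Polynomial ℂ) :
    shiftOp c (Polynomial.C a) = Polynomial.C a := taylor_C _ a
lemma shiftOp_shiftOp (c d : ℂ) (f : P2) :
    shiftOp c (shiftOp d f) = shiftOp (c + d) f := by
  rw [shiftOp_apply, shiftOp_apply, taylor_taylor, shiftOp_apply, ← Polynomial.C_add]
lemma shiftOp_zero (f : P2) : shiftOp 0 f = f := by
  simp [shiftOp_apply]
lemma shiftOp_X (c : ℂ) : shiftOp c xP = xP + Polynomial.C (Polynomial.C c) := taylor_X _

def evP : P2 →+* ℂ :=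
  (Polynomial.evalRingHom (0 : ℂ)).comp (Polynomial.evalRingHom (0 : Polynomial ℂ))

lemma evP_X : evP xP = 0 := by simp [evP, xP]
lemma evP_Y : evP yP = 0 := by simp [evP, yP]
lemma evP_C (a : Polynomial ℂ) : evP (Polynomial.C a) = a.eval 0 := by simp [evP]

lemma mem_Rg {g : Polynomial ℂ} {f : P2} : f ∈ Rg g ↔ Polynomial.C g ∣ f := by
  constructor
  · rintro ⟨h, rfl⟩; exact ⟨h, rfl⟩
  · rintro ⟨h, rfl⟩; exact ⟨h, rfl⟩

lemma mem_Sg {g : Polynomial ℂ} {f : P2} :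
    f ∈ Sg g ↔ ∃ h : P2, f = Polynomial.C g * h ∧ evP h = 0 := by
  constructor
  · intro hf
    rcases Submodule.mem_sup.mp hf with ⟨u, ⟨a, rfl⟩, v, ⟨b, rfl⟩, rfl⟩
    refine ⟨xP * a + yP * b, by simp [mulOp]; ring, ?_⟩
    simp [map_add, map_mul, evP_X, evP_Y]
  · rintro ⟨h, rfl, hev⟩
    have hd : h = xP * h.divX + Polynomial.C (h.coeff 0) := by
      simpa [xP, mul_comm] using (Polynomial.X_mul_divX_add h).symm
    have h0 : (h.coeff 0).eval 0 = 0 := by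
      have : evP h = (h.coeff 0).eval 0 := by
        conv_lhs => rw [hd]
        simp [map_add, map_mul, evP_X, evP_C]
      rw [hev] at this; exact this.symm
    obtain ⟨b, hb⟩ : Polynomial.X ∣ h.coeff 0 := by
      rw [Polynomial.X_dvd_iff, Polynomial.coeff_zero_eq_eval_zero]; exact h0
    have : Polynomial.C g * h
        = (xP * Polynomial.C g) * h.divX + (yP * Polynomial.C g) * Polynomial.C b := by
      conv_lhs => rw [hd, hb]
      simp [yP, map_mul]; ring
    rw [this]
    exact Submodule.add_mem _
      (Submodule.mem_sup_left (LinearMap.mem_range_self _ _))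
      (Submodule.mem_sup_right (LinearMap.mem_range_self _ _))

lemma dvd_shiftOp {g : Polynomial ℂ} {f : P2} (c : ℂ) (h : Polynomial.C g ∣ f) :
    Polynomial.C g ∣ shiftOp c f := by
  rcases h with ⟨u, rfl⟩
  exact ⟨shiftOp c u, by rw [shiftOp_mul, shiftOp_C]⟩

lemma dvd_of_dvd_shiftOp {g : Polynomial ℂ} {f : P2} (c : ℂ)
    (h : Polynomial.C g ∣ shiftOp c f) : Polynomial.C g ∣ f := by
  have := dvd_shiftOp (-c) h
  rwa [shiftOp_shiftOp, neg_add_cancel, shiftOp_zero] at this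

lemma taylor_one_coeff {R : Type*} [CommRing R] (f : R[X]) (n : ℕ)
    (hf : f.natDegree ≤ n + 1) :
    (taylor (1 : R) f).coeff n = f.coeff n + ((n + 1 : ℕ) : R) * f.coeff (n + 1) := by
  rw [taylor_coeff]
  have hdeg : (hasseDeriv n f).natDegree < 2 := by
    refine lt_of_le_of_lt (natDegree_le_iff_coeff_eq_zero.mpr fun N hN => ?_) one_lt_two
    rw [hasseDeriv_coeff]
    have : f.coeff (N + n) = 0 := by
      apply coeff_eq_zero_of_natDegree_lt; omega
    simp [this]
  rw [eval_eq_sum_range' hdeg]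
  simp [Finset.sum_range_succ, hasseDeriv_coeff]
  rw [Nat.add_comm 1 n, Nat.choose_succ_self_right]
  push_cast; ring


lemma mul_closed (J : Submodule ℂ P2)
    (hx : ∀ f ∈ J, xP * f ∈ J) (hy : ∀ f ∈ J, yP * f ∈ J) :
    ∀ (q : P2), ∀ f ∈ J, q * f ∈ J := by
  have hxn : ∀ (n : ℕ), ∀ f ∈ J, (Polynomial.X : P2) ^ n * f ∈ J := by
    intro n
    induction n with
    | zero => intro f hf; simpa using hf
    | succ n ih =>
      intro f hf
      have := hx _ (ih f hf)
      rw [show xP * ((Polynomial.X : P2) ^ n * f) = (Polynomial.X : P2) ^ (n+1) * f by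
        rw [xP]; ring] at this
      exact this
  have hyn : ∀ (n : ℕ), ∀ f ∈ J, (yP : P2) ^ n * f ∈ J := by
    intro n
    induction n with
    | zero => intro f hf; simpa using hf
    | succ n ih =>
      intro f hf
      have := hy _ (ih f hf)
      rw [show yP * (yP ^ n * f) = yP ^ (n+1) * f by ring] at this
      exact this
  have hCa : ∀ (a : Polynomial ℂ), ∀ f ∈ J, Polynomial.C a * f ∈ J := by
    intro a
    induction a using Polynomial.induction_on' with
    | add p q hp hq =>
      intro f hf
      rw [map_add, add_mul]; exact J.add_mem (hp f hf) (hq f hf)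
    | monomial k r =>
      intro f hf
      have h1 : (Polynomial.C (Polynomial.monomial k r) : P2) * f = r • (yP ^ k * f) := by
        rw [← Polynomial.C_mul_X_pow_eq_monomial, map_mul, map_pow, Algebra.smul_def]
        show _ = algebraMap ℂ P2 r * _
        rw [show algebraMap ℂ P2 r = Polynomial.C (Polynomial.C r) from rfl, yP]
        ring
      rw [h1]
      exact J.smul_mem r (hyn k f hf)
  intro q
  induction q using Polynomial.induction_on' with
  | add p q hp hq =>
    intro f hf
    rw [add_mul]; exact J.add_mem (hp f hf) (hq f hf)
  | monomial n a =>
    intro f hf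
    rw [← Polynomial.C_mul_X_pow_eq_monomial, mul_assoc]
    exact hCa a _ (hxn n f hf)

lemma classify (J : Submodule ℂ P2)
    (hmul : ∀ (q : P2), ∀ f ∈ J, q * f ∈ J)
    (hshift : ∀ f ∈ J, shiftOp 1 f ∈ J) :
    ∃ g : Polynomial ℂ, J = Rg g := by
  set I : Ideal (Polynomial ℂ) :=
    { carrier := {a | Polynomial.C a ∈ J}
      add_mem' := fun ha hb => by simpa [map_add] using J.add_mem ha hb
      zero_mem' := by simpa using J.zero_mem
      smul_mem' := fun r a ha => by
        simpa [smul_eq_mul, map_mul] using hmul (Polynomial.C r) _ ha } with hI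
  obtain ⟨g, hg⟩ := (IsPrincipalIdealRing.principal I).principal
  have hmemI : ∀ a : Polynomial ℂ, (Polynomial.C a ∈ J ↔ g ∣ a) := by
    intro a
    rw [show (Polynomial.C a ∈ J) ↔ a ∈ I from Iff.rfl, hg]
    exact Ideal.mem_span_singleton
  have hgJ : Polynomial.C g ∈ J := (hmemI g).mpr dvd_rfl
  have key : ∀ d : ℕ, ∀ f ∈ J, f.natDegree ≤ d → Polynomial.C g ∣ f := by
    intro d
    induction d with
    | zero =>
      intro f hf hdeg
      obtain ⟨a, ha⟩ := Polynomial.natDegree_eq_zero.mp (Nat.le_zero.mp hdeg)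
      rw [← ha]
      exact map_dvd (Polynomial.C : Polynomial ℂ →+* P2) ((hmemI a).mp (by rwa [ha]))
    | succ d ih =>
      intro f hf hdeg
      set Δ : P2 := shiftOp 1 f - f with hΔ
      have hΔJ : Δ ∈ J := J.sub_mem (hshift f hf) hf
      have hsh : shiftOp 1 f = taylor (1 : Polynomial ℂ) f := by
        rw [shiftOp_apply, map_one]
      have hcoeff : ∀ n : ℕ, f.natDegree ≤ n + 1 →
          Δ.coeff n = ((n+1 : ℕ) : Polynomial ℂ) * f.coeff (n+1) := by
        intro n hn
        rw [hΔ, Polynomial.coeff_sub, hsh, taylor_one_coeff f n hn]; ring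
      have hΔdeg : Δ.natDegree ≤ d := by
        refine natDegree_le_iff_coeff_eq_zero.mpr fun N hN => ?_
        have h1 : f.natDegree ≤ N + 1 := le_trans hdeg (by omega)
        rw [hcoeff N h1]
        have h2 : f.coeff (N+1) = 0 := coeff_eq_zero_of_natDegree_lt (by omega)
        simp [h2]
      have hΔdvd := ih Δ hΔJ hΔdeg
      have hld : g ∣ f.coeff (d+1) := by
        have h1 := (Polynomial.C_dvd_iff_dvd_coeff g Δ).mp hΔdvd d
        rw [hcoeff d hdeg] at h1
        have hu : IsUnit ((d+1 : ℕ) : Polynomial ℂ) := by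
          rw [← Polynomial.C_eq_natCast]
          refine Polynomial.isUnit_C.mpr (isUnit_iff_ne_zero.mpr ?_)
          exact_mod_cast Nat.succ_ne_zero d
        exact (hu.dvd_mul_left).mp h1
      obtain ⟨c, hc⟩ := id hld
      have hterm : Polynomial.C (f.coeff (d+1)) * Polynomial.X ^ (d+1) ∈ J := by
        rw [hc, map_mul]
        have := hmul (Polynomial.C c * Polynomial.X ^ (d+1)) _ hgJ
        rw [show Polynomial.C c * Polynomial.X ^ (d+1) * Polynomial.C g
            = Polynomial.C g * Polynomial.C c * Polynomial.X ^ (d+1) by ring] at this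
        exact this
      have hrest : f - Polynomial.C (f.coeff (d+1)) * Polynomial.X ^ (d+1) ∈ J :=
        J.sub_mem hf hterm
      have hrestdeg :
          (f - Polynomial.C (f.coeff (d+1)) * Polynomial.X ^ (d+1)).natDegree ≤ d := by
        refine natDegree_le_iff_coeff_eq_zero.mpr fun N hN => ?_
        rw [Polynomial.coeff_sub, Polynomial.coeff_C_mul, Polynomial.coeff_X_pow]
        rcases eq_or_ne N (d+1) with rfl | hNe
        · simp
        · have h2 : f.coeff N = 0 := coeff_eq_zero_of_natDegree_lt (by omega)
          simp [h2, hNe]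
      have h2 := ih _ hrest hrestdeg
      have h3 : Polynomial.C g ∣ Polynomial.C (f.coeff (d+1)) * Polynomial.X ^ (d+1) :=
        (map_dvd (Polynomial.C : Polynomial ℂ →+* P2) hld).mul_right _
      have h4 := dvd_add h2 h3
      rwa [sub_add_cancel] at h4
  refine ⟨g, ?_⟩
  ext f
  rw [mem_Rg]
  constructor
  · intro hf; exact key f.natDegree f hf le_rfl
  · rintro ⟨h, rfl⟩
    have := hmul h _ hgJ
    rwa [mul_comm] at this

lemma omegaLe_apply (lam : ℂ) (β : Polynomial ℂ) (m : ℤ) (f : P2) :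
    omegaLe lam β m f
      = lam ^ m • ((xP + Polynomial.C ((m : ℂ) • β)) * shiftOp (m : ℂ) f) := rfl
lemma omegaLo_apply (lam : ℂ) (β : Polynomial ℂ) (m : ℤ) (f : P2) :
    omegaLo lam β m f
      = lam ^ m • ((xP + Polynomial.C ((m : ℂ) • (β + Polynomial.C (1/2))))
          * shiftOp (m : ℂ) f) := rfl
lemma omegaH_apply (lam : ℂ) (m : ℤ) (f : P2) :
    omegaH lam m f = lam ^ m • (yP * shiftOp (m : ℂ) f) := rfl
lemma omegaGe_apply (lam : ℂ) (k : ℤ) (f : P2) :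
    omegaGe lam k f = lam ^ k • shiftOp ((k : ℂ) + 1/2) f := rfl
lemma omegaGo_apply (lam : ℂ) (β : Polynomial ℂ) (k : ℤ) (f : P2) :
    omegaGo lam β k f
      = lam ^ (k+1) • ((xP + Polynomial.C (((2*k+1 : ℤ) : ℂ) • β))
          * shiftOp ((k : ℂ) + 1/2) f) := rfl
lemma omegaQe_apply (k : ℤ) (f : P2) : omegaQe k f = 0 := rfl
lemma omegaQo_apply (lam : ℂ) (k : ℤ) (f : P2) :
    omegaQo lam k f = lam ^ (k+1) • (yP * shiftOp ((k : ℂ) + 1/2) f) := rfl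

lemma evP_smulC (c : ℂ) (β : Polynomial ℂ) (hβ : β.eval 0 = 0) :
    evP (Polynomial.C (c • β)) = 0 := by
  rw [evP_C, Polynomial.smul_eq_C_mul]
  simp [hβ]

lemma isSub_Rg (lam : ℂ) (β : Polynomial ℂ) (g : Polynomial ℂ) :
    IsOmegaSub lam β (Rg g) (Rg g) := by
  have key : ∀ (a : P2) (c : ℂ) (f : P2), f ∈ Rg g → a * shiftOp c f ∈ Rg g := by
    intro a c f hf
    exact mem_Rg.mpr ((dvd_shiftOp c (mem_Rg.mp hf)).mul_left a)
  refine ⟨?_, ?_, ?_, ?_, ?_, ?_, ?_, ?_⟩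
  · intro m f hf; rw [omegaLe_apply]; exact (Rg g).smul_mem _ (key _ _ _ hf)
  · intro m f hf; rw [omegaLo_apply]; exact (Rg g).smul_mem _ (key _ _ _ hf)
  · intro m f hf; rw [omegaH_apply]; exact (Rg g).smul_mem _ (key _ _ _ hf)
  · intro m f hf; rw [omegaH_apply]; exact (Rg g).smul_mem _ (key _ _ _ hf)
  · intro k f hf; rw [omegaGe_apply]
    exact (Rg g).smul_mem _ (mem_Rg.mpr (dvd_shiftOp _ (mem_Rg.mp hf)))
  · intro k f hf; rw [omegaGo_apply]; exact (Rg g).smul_mem _ (key _ _ _ hf)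
  · intro k f hf; rw [omegaQe_apply]; exact (Rg g).zero_mem
  · intro k f hf; rw [omegaQo_apply]; exact (Rg g).smul_mem _ (key _ _ _ hf)

lemma isSub_Sg (lam : ℂ) (β : Polynomial ℂ) (hβ : β.eval 0 = 0) (g : Polynomial ℂ) :
    IsOmegaSub lam β (Sg g) (Rg g) := by
  -- from Rg into Sg (multiplication by something with evP = 0)
  have keyS : ∀ (a : P2), evP a = 0 → ∀ (c : ℂ) (f : P2), f ∈ Rg g →
      a * shiftOp c f ∈ Sg g := by
    intro a ha c f hf
    obtain ⟨h, rfl⟩ := mem_Rg.mp hf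
    refine mem_Sg.mpr ⟨a * shiftOp c h, ?_, ?_⟩
    · rw [shiftOp_mul, shiftOp_C]; ring
    · rw [map_mul, ha, zero_mul]
  have keyR : ∀ (a : P2) (c : ℂ) (f : P2), f ∈ Rg g → a * shiftOp c f ∈ Rg g := by
    intro a c f hf
    exact mem_Rg.mpr ((dvd_shiftOp c (mem_Rg.mp hf)).mul_left a)
  have hSR : ∀ f ∈ Sg g, f ∈ Rg g := by
    intro f hf
    obtain ⟨h, rfl, -⟩ := mem_Sg.mp hf
    exact mem_Rg.mpr (Dvd.intro h rfl)
  refine ⟨?_, ?_, ?_, ?_, ?_, ?_, ?_, ?_⟩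
  · intro m f hf; rw [omegaLe_apply]
    refine (Sg g).smul_mem _ (keyS _ ?_ _ _ (hSR f hf))
    rw [map_add, evP_X, evP_smulC _ _ hβ, add_zero]
  · intro m f hf; rw [omegaLo_apply]; exact (Rg g).smul_mem _ (keyR _ _ _ hf)
  · intro m f hf; rw [omegaH_apply]
    exact (Sg g).smul_mem _ (keyS _ evP_Y _ _ (hSR f hf))
  · intro m f hf; rw [omegaH_apply]; exact (Rg g).smul_mem _ (keyR _ _ _ hf)
  · intro k f hf; rw [omegaGe_apply]
    exact (Rg g).smul_mem _ (mem_Rg.mpr (dvd_shiftOp _ (mem_Rg.mp (hSR f hf))))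
  · intro k f hf; rw [omegaGo_apply]
    refine (Sg g).smul_mem _ (keyS _ ?_ _ _ hf)
    rw [map_add, evP_X, evP_smulC _ _ hβ, add_zero]
  · intro k f hf; rw [omegaQe_apply]; exact (Rg g).zero_mem
  · intro k f hf; rw [omegaQo_apply]
    exact (Sg g).smul_mem _ (keyS _ evP_Y _ _ hf)

lemma hard_dir (lam : ℂ) (hlam : lam ≠ 0) (β : Polynomial ℂ) (hβ : β.eval 0 = 0)
    (F₀ F₁ : Submodule ℂ P2) (hS : IsOmegaSub lam β F₀ F₁) :
    (∃ g : Polynomial ℂ, F₀ = Rg g ∧ F₁ = Rg g) ∨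
    (∃ g : Polynomial ℂ, F₀ = Sg g ∧ F₁ = Rg g) := by
  obtain ⟨hLe, hLo, hHe, hHo, hGe, hGo, hQe, hQo⟩ := hS
  have unsmul : ∀ (F : Submodule ℂ P2) (z : ℂ), z ≠ 0 → ∀ v : P2, z • v ∈ F → v ∈ F := by
    intro F z hz v hv
    have := F.smul_mem z⁻¹ hv
    rwa [smul_smul, inv_mul_cancel₀ hz, one_smul] at this
  have hlamz : ∀ n : ℤ, lam ^ n ≠ 0 := fun n => zpow_ne_zero n hlam
  -- multiplicative closure of F₁ and F₀
  have hx1 : ∀ f ∈ F₁, xP * f ∈ F₁ := by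
    intro f hf
    have h := hLo 0 f hf
    rw [omegaLo_apply] at h
    simpa [shiftOp_zero] using h
  have hy1 : ∀ f ∈ F₁, yP * f ∈ F₁ := by
    intro f hf
    have h := hHo 0 f hf
    rw [omegaH_apply] at h
    simpa [shiftOp_zero] using h
  have hx0 : ∀ f ∈ F₀, xP * f ∈ F₀ := by
    intro f hf
    have h := hLe 0 f hf
    rw [omegaLe_apply] at h
    simpa [shiftOp_zero] using h
  have hy0 : ∀ f ∈ F₀, yP * f ∈ F₀ := by
    intro f hf
    have h := hHe 0 f hf
    rw [omegaH_apply] at h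
    simpa [shiftOp_zero] using h
  have hmul1 := mul_closed F₁ hx1 hy1
  have hmul0 := mul_closed F₀ hx0 hy0
  -- the key composite operator G ∘ G on F₁
  have hu : ∀ (k l : ℤ), ∀ f ∈ F₁,
      (xP + Polynomial.C (Polynomial.C ((l:ℂ) + 1/2))
        + Polynomial.C (((2*k+1 : ℤ) : ℂ) • β))
        * shiftOp ((k:ℂ) + (l:ℂ) + 1) f ∈ F₁ := by
    intro k l f hf
    have h1 := hGe l _ (hGo k f hf)
    rw [omegaGo_apply, omegaGe_apply, map_smul, smul_smul] at h1
    rw [shiftOp_mul, shiftOp_shiftOp, map_add, shiftOp_X, shiftOp_C] at h1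
    rw [show ((l:ℂ) + 1/2) + ((k:ℂ) + 1/2) = (k:ℂ) + (l:ℂ) + 1 by ring] at h1
    exact unsmul F₁ _ (mul_ne_zero (hlamz l) (hlamz (k+1))) _ h1
  -- shift-invariance of F₁
  obtain ⟨β', hβ'⟩ : (Polynomial.X : Polynomial ℂ) ∣ β := by
    rw [Polynomial.X_dvd_iff, Polynomial.coeff_zero_eq_eval_zero]; exact hβ
  have hshift1 : ∀ f ∈ F₁, shiftOp 1 f ∈ F₁ := by
    intro f hf
    have h0 := hu 0 0 f hf
    have h1 := hu 1 (-1) f hf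
    have hdiff : Polynomial.C (1 - 2*β) * shiftOp 1 f ∈ F₁ := by
      have e : Polynomial.C (1 - 2*β) * shiftOp 1 f =
          (xP + Polynomial.C (Polynomial.C (((0:ℤ):ℂ) + 1/2))
            + Polynomial.C (((2*0+1 : ℤ) : ℂ) • β))
            * shiftOp (((0:ℤ):ℂ) + ((0:ℤ):ℂ) + 1) f
          - (xP + Polynomial.C (Polynomial.C ((((-1):ℤ):ℂ) + 1/2))
            + Polynomial.C (((2*1+1 : ℤ) : ℂ) • β))
            * shiftOp (((1:ℤ):ℂ) + (((-1):ℤ):ℂ) + 1) f := by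
        push_cast
        rw [show ((0:ℂ) + (0:ℂ) + 1) = 1 by ring, show ((1:ℂ) + (-1:ℂ) + 1) = 1 by ring]
        simp only [Polynomial.smul_eq_C_mul, map_sub, map_add, map_mul, map_one,
          Polynomial.C_1, map_ofNat, map_zero, map_neg]
        push_cast
        ring
      rw [e]; exact F₁.sub_mem h0 h1
    have hyS : yP * shiftOp 1 f ∈ F₁ := by
      have h := hHo 1 f hf
      rw [omegaH_apply] at h
      have h2 := unsmul F₁ _ (hlamz 1) _ h
      simpa using h2
    have h2 := hmul1 (Polynomial.C (2*β')) _ hyS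
    have e : shiftOp 1 f = Polynomial.C (1 - 2*β) * shiftOp 1 f
        + Polynomial.C (2*β') * (yP * shiftOp 1 f) := by
      rw [yP, ← mul_assoc, ← map_mul, ← add_mul, ← map_add]
      rw [show (1 - 2*β) + 2*β'*Polynomial.X = 1 by rw [hβ']; ring]
      rw [map_one, one_mul]
    rw [e]; exact F₁.add_mem hdiff h2
  obtain ⟨g, hF1⟩ := classify F₁ hmul1 hshift1
  -- F₀ ⊆ Rg g
  have hF0Rg : F₀ ≤ Rg g := by
    intro f hf
    have h := hGe 0 f hf
    rw [omegaGe_apply, hF1] at h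
    have h2 := unsmul (Rg g) _ (hlamz 0) _ h
    exact mem_Rg.mpr (dvd_of_dvd_shiftOp _ (mem_Rg.mp h2))
  have hCgF1 : Polynomial.C g ∈ F₁ := by
    rw [hF1]; exact mem_Rg.mpr dvd_rfl
  -- y g ∈ F₀ and x g ∈ F₀
  have hyg : yP * Polynomial.C g ∈ F₀ := by
    have h := hQo 0 _ hCgF1
    rw [omegaQo_apply, shiftOp_C] at h
    exact unsmul F₀ _ (hlamz 1) _ h
  have hxg : xP * Polynomial.C g ∈ F₀ := by
    have h0 := hGo 0 _ hCgF1
    have h1 := hGo (-1) _ hCgF1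
    rw [omegaGo_apply, shiftOp_C] at h0 h1
    have h0' := unsmul F₀ _ (hlamz (0+1)) _ h0
    have h1' := unsmul F₀ _ (hlamz (-1+1)) _ h1
    have h2 := F₀.add_mem h0' h1'
    have e : (xP + Polynomial.C (((2*0+1 : ℤ) : ℂ) • β)) * Polynomial.C g
        + (xP + Polynomial.C (((2*(-1)+1 : ℤ) : ℂ) • β)) * Polynomial.C g
        = (2:ℂ) • (xP * Polynomial.C g) := by
      push_cast
      simp only [Polynomial.smul_eq_C_mul, map_sub, map_add, map_mul, map_one, Polynomial.C_1,
        Polynomial.C_neg]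
      rw [two_smul]
      push_cast
      ring
    rw [e] at h2
    exact unsmul F₀ _ two_ne_zero _ h2
  have hSgF0 : Sg g ≤ F₀ := by
    apply sup_le
    · rintro v ⟨a, rfl⟩
      have := hmul0 a _ hxg
      rw [show a * (xP * Polynomial.C g) = mulOp (xP * Polynomial.C g) a by
        simp [mulOp]; ring] at this
      exact this
    · rintro v ⟨a, rfl⟩
      have := hmul0 a _ hyg
      rw [show a * (yP * Polynomial.C g) = mulOp (yP * Polynomial.C g) a by
        simp [mulOp]; ring] at this
      exact this
  by_cases hc : F₀ ≤ Sg g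
  · right; exact ⟨g, le_antisymm hc hSgF0, hF1⟩
  · left
    refine ⟨g, ?_, hF1⟩
    obtain ⟨u, huF, huS⟩ := Set.not_subset.mp hc
    obtain ⟨q, rfl⟩ := mem_Rg.mp (hF0Rg huF)
    have hq0 : evP q ≠ 0 := by
      intro h0
      exact huS (mem_Sg.mpr ⟨q, rfl, h0⟩)
    have h2 : Polynomial.C g * (q - Polynomial.C (Polynomial.C (evP q))) ∈ Sg g := by
      refine mem_Sg.mpr ⟨_, rfl, ?_⟩
      rw [map_sub, evP_C, Polynomial.eval_C, sub_self]
    have h3 : Polynomial.C g * Polynomial.C (Polynomial.C (evP q)) ∈ F₀ := by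
      have := F₀.sub_mem huF (hSgF0 h2)
      rw [show Polynomial.C g * q - Polynomial.C g * (q - Polynomial.C (Polynomial.C (evP q)))
        = Polynomial.C g * Polynomial.C (Polynomial.C (evP q)) by ring] at this
      exact this
    have h4 : Polynomial.C g ∈ F₀ := by
      have e : Polynomial.C g * Polynomial.C (Polynomial.C (evP q))
          = (evP q) • Polynomial.C g := by
        rw [Algebra.smul_def]
        rw [show algebraMap ℂ P2 (evP q) = Polynomial.C (Polynomial.C (evP q)) from rfl]
        ring
      rw [e] at h3
      exact unsmul F₀ _ hq0 _ h3
    have hRgF0 : Rg g ≤ F₀ := by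
      rintro v ⟨a, rfl⟩
      have := hmul0 a _ h4
      rw [show a * Polynomial.C g = mulOp (Polynomial.C g) a by simp [mulOp]; ring] at this
      exact this
    exact le_antisymm hF0Rg hRgF0

/-- For `β(0) = 0`, the `𝔤`-submodules of `Ω(λ,β)` are exactly the subspaces
`R_g = g(y)ℂ[x,y] ⊕ g(t)ℂ[s,t]` and `S_g = g(y)(xℂ[x,y]+yℂ[x,y]) ⊕ g(t)ℂ[s,t]`, `g ∈ ℂ[y]`;
moreover `S_g ⊆ R_g ⊆ R_ĝ` whenever `ĝ ∣ g`. -/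
theorem statement8 (lam : ℂ) (hlam : lam ≠ 0) (β : Polynomial ℂ)
    (hβ : β.eval 0 = 0) :
    (∀ F₀ F₁ : Submodule ℂ P2,
      IsOmegaSub lam β F₀ F₁ ↔
        ((∃ g : Polynomial ℂ, F₀ = Rg g ∧ F₁ = Rg g) ∨
         (∃ g : Polynomial ℂ, F₀ = Sg g ∧ F₁ = Rg g))) ∧
    (∀ g ghat : Polynomial ℂ, ghat ∣ g → Sg g ≤ Rg g ∧ Rg g ≤ Rg ghat) := by
  constructor
  · intro F₀ F₁
    constructor
    · exact hard_dir lam hlam β hβ F₀ F₁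
    · rintro (⟨g, rfl, rfl⟩ | ⟨g, rfl, rfl⟩)
      · exact isSub_Rg lam β g
      · exact isSub_Sg lam β hβ g
  · intro g ghat hdvd
    constructor
    · intro f hf
      obtain ⟨h, rfl, -⟩ := mem_Sg.mp hf
      exact mem_Rg.mpr (Dvd.intro h rfl)
    · intro f hf
      exact mem_Rg.mpr
        (dvd_trans (map_dvd (Polynomial.C : Polynomial ℂ →+* P2) hdvd) (mem_Rg.mp hf))
end
end
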